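/- Let u : Ω → ℝ be Euclidean Lipschitz on a bounded open set Ω ⊂ ℝ^{2n} and let the intrinsic-graph area functional be A(u) = ∫_Ω √(1+|∇^u u|²) dL^{2n}, where ∇^u u = (X_1 u, …, X_{2n−2} u, X_{2n−1}^u u). Then for any v ∈ C_c^∞(Ω), the first variation is d/ds|_{s=0} A(u + s v) = ∫_Ω [ Σ_{i=1}^{2n−2} (X_i u · X_i v) + X_{2n−1}^u u · (X_{2n−1}^u v + v ∂_{x_{2n}} u) ] / √(1+|∇^u u|²) dL^{2n}. -/

import Mathlib

open Finset MeasureTheory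

/-- Partial derivative in the `k`-th coordinate direction (0-based indexing of `x_1,…,x_{2n}`). -/
noncomputable def pd {m : ℕ} (k : ℕ) (f : (Fin m → ℝ) → ℝ) (x : Fin m → ℝ) : ℝ :=
  fderiv ℝ f x (fun j => if (j : ℕ) = k then 1 else 0)

/-- The `k`-th coordinate of `x` (0-based). -/
def coordN {m : ℕ} (k : ℕ) (x : Fin m → ℝ) : ℝ :=
  ∑ j : Fin m, if (j : ℕ) = k then x j else 0

/-- The projected horizontal vector fields `X_i^w` (0-based index `i = 0,…,2n-2`):
`∂_{x_i}` for small `i`, `∂_{x_i} - x_{i-n+1}∂_{x_{2n}}` for middle `i`, and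
`X_{2n-1}^w = ∂_{x_{2n-1}} + w ∂_{x_{2n}}`. -/
noncomputable def XU (n : ℕ) (w : (Fin (2*n) → ℝ) → ℝ) (i : ℕ)
    (f : (Fin (2*n) → ℝ) → ℝ) (x : Fin (2*n) → ℝ) : ℝ :=
  if i < n - 1 then pd i f x
  else if i < 2*n - 2 then pd i f x - coordN (i - n + 1) x * pd (2*n-1) f x
  else pd (2*n-2) f x + w x * pd (2*n-1) f x

/-- `|∇^w f|²  = Σ_{i=1}^{2n-1} (X_i^w f)²`. -/
noncomputable def gradSq (n : ℕ) (w f : (Fin (2*n) → ℝ) → ℝ) (x : Fin (2*n) → ℝ) : ℝ :=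
  ∑ i ∈ Finset.range (2*n-1), (XU n w i f x) ^ 2

lemma abs_coordN_le {m k : ℕ} (x : Fin m → ℝ) : |coordN k x| ≤ ‖x‖ := by
  by_cases h : k < m
  · have he : ∀ j : Fin m, ((j : ℕ) = k) = (j = ⟨k, h⟩) := by
      intro j; simp [Fin.ext_iff]
    have hc : coordN k x = x ⟨k, h⟩ := by
      unfold coordN
      simp_rw [he]
      rw [Finset.sum_ite_eq' Finset.univ (⟨k, h⟩ : Fin m) x]
      simp
    rw [hc, ← Real.norm_eq_abs]
    exact norm_le_pi_norm x ⟨k, h⟩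
  · have hc : coordN k x = 0 := by
      unfold coordN
      apply Finset.sum_eq_zero
      intro j _
      rw [if_neg]
      omega
    simp [hc]

lemma abs_pd_le {m : ℕ} (f : (Fin m → ℝ) → ℝ) (x : Fin m → ℝ) (k : ℕ) :
    |pd k f x| ≤ ‖fderiv ℝ f x‖ := by
  have h1 : ‖(fun j : Fin m => if (j : ℕ) = k then (1:ℝ) else 0)‖ ≤ 1 := by
    apply pi_norm_le_iff_of_nonneg zero_le_one |>.2
    intro j; dsimp; split_ifs <;> simp
  calc |pd k f x| = ‖fderiv ℝ f x (fun j : Fin m => if (j : ℕ) = k then (1:ℝ) else 0)‖ :=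
        (Real.norm_eq_abs _).symm
    _ ≤ ‖fderiv ℝ f x‖ * ‖(fun j : Fin m => if (j : ℕ) = k then (1:ℝ) else 0)‖ :=
        ContinuousLinearMap.le_opNorm _ _
    _ ≤ ‖fderiv ℝ f x‖ * 1 := mul_le_mul_of_nonneg_left h1 (norm_nonneg _)
    _ = _ := mul_one _

lemma measurable_pd {m : ℕ} (f : (Fin m → ℝ) → ℝ) (k : ℕ) :
    Measurable fun x => pd k f x := by
  unfold pd; exact measurable_fderiv_apply_const ℝ f _

lemma measurable_coordN {m k : ℕ} : Measurable fun x : Fin m → ℝ => coordN k x := by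
  unfold coordN
  apply Finset.measurable_sum
  intro j _
  by_cases h : (j : ℕ) = k
  · simpa [h] using measurable_pi_apply j
  · simp [h]

set_option maxHeartbeats 1600000 in
/-- First variation of the intrinsic-graph area functional
`A(u) = ∫_Ω √(1+|∇^u u|²)` at a Euclidean Lipschitz `u` in the direction of a test
function `v`; note `∇^{u+sv}(u+sv)` depends on `s` both through the function and the
vector field. -/
theorem stmt_6 (n : ℕ) (hn : 1 ≤ n) (Ω : Set (Fin (2*n) → ℝ)) (hΩo : IsOpen Ω)
    (hΩb : Bornology.IsBounded Ω) (u v : (Fin (2*n) → ℝ) → ℝ)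
    (hu : ∃ K : NNReal, LipschitzOnWith K u Ω)
    (hv : ContDiff ℝ (⊤ : ℕ∞) v) (hvs : HasCompactSupport v) (hvΩ : tsupport v ⊆ Ω) :
    HasDerivAt
      (fun s : ℝ => ∫ x in Ω,
        Real.sqrt (1 + gradSq n (fun y => u y + s * v y) (fun y => u y + s * v y) x))
      (∫ x in Ω,
        ((∑ i ∈ Finset.range (2*n-2), XU n u i u x * XU n u i v x)
            + XU n u (2*n-2) u x * (XU n u (2*n-2) v x + v x * pd (2*n-1) u x))
          / Real.sqrt (1 + gradSq n u u x))
      0 := by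
  classical
  obtain ⟨K, huK⟩ := hu
  rcases Set.eq_empty_or_nonempty Ω with hΩe | ⟨x₀, hx₀⟩
  · simp only [hΩe, Measure.restrict_empty, integral_zero_measure]
    exact hasDerivAt_const 0 _
  have hvd : ∀ y, DifferentiableAt ℝ v y := fun y => (hv.differentiable (by simp)) y
  have hvc : Continuous v := hv.continuous
  obtain ⟨R, hR⟩ : ∃ R, ∀ x ∈ Ω, ‖x‖ ≤ R := isBounded_iff_forall_norm_le.1 hΩb
  have hR0 : 0 ≤ R := le_trans (norm_nonneg x₀) (hR x₀ hx₀)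
  obtain ⟨Cv, hCv⟩ : ∃ C, ∀ y, ‖fderiv ℝ v y‖ ≤ C :=
    (hvs.fderiv (𝕜 := ℝ)).exists_bound_of_continuous (hv.continuous_fderiv (by simp))
  have hCv0 : 0 ≤ Cv := le_trans (norm_nonneg _) (hCv 0)
  obtain ⟨Mv, hMv⟩ : ∃ C, ∀ y, ‖v y‖ ≤ C := hvs.exists_bound_of_continuous hvc
  have hMv0 : 0 ≤ Mv := le_trans (norm_nonneg _) (hMv 0)
  have hMvx : ∀ y, |v y| ≤ Mv := fun y => (Real.norm_eq_abs (v y)) ▸ hMv y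
  set Mu : ℝ := |u x₀| + K * (2 * R) with hMudef
  have hMu0 : 0 ≤ Mu := by positivity
  have hMu : ∀ x ∈ Ω, |u x| ≤ Mu := by
    intro x hx
    have h1 : dist (u x) (u x₀) ≤ K * dist x x₀ := huK.dist_le_mul x hx x₀ hx₀
    have h2 : dist x x₀ ≤ 2 * R := by
      rw [dist_eq_norm]
      calc ‖x - x₀‖ ≤ ‖x‖ + ‖x₀‖ := norm_sub_le x x₀
        _ ≤ R + R := add_le_add (hR x hx) (hR x₀ hx₀)
        _ = 2 * R := by ring
    have h3 : |u x - u x₀| ≤ K * (2 * R) := by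
      rw [← Real.dist_eq]
      calc dist (u x) (u x₀) ≤ K * dist x x₀ := h1
        _ ≤ K * (2 * R) := by
            exact mul_le_mul_of_nonneg_left h2 K.coe_nonneg
    have h4 : |u x| - |u x₀| ≤ |u x - u x₀| := abs_sub_abs_le_abs_sub _ _
    rw [hMudef]; linarith
  have hpdu : ∀ x ∈ Ω, ∀ k : ℕ, |pd k u x| ≤ K := fun x hx k =>
    (abs_pd_le u x k).trans (norm_fderiv_le_of_lipschitzOn ℝ (hΩo.mem_nhds hx) huK)
  have hpdv : ∀ (x : Fin (2*n) → ℝ) (k : ℕ), |pd k v x| ≤ Cv := fun x k =>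
    (abs_pd_le v x k).trans (hCv x)
  -- behaviour of `pd` of `u + s v` at differentiability / non-differentiability points
  have hpds : ∀ x, DifferentiableAt ℝ u x → ∀ (s : ℝ) (k : ℕ),
      pd k (fun y => u y + s * v y) x = pd k u x + s * pd k v x := by
    intro x hdx s k
    have h1 : HasFDerivAt (fun y => u y + s * v y) (fderiv ℝ u x + s • fderiv ℝ v x) x :=
      hdx.hasFDerivAt.add ((hvd x).hasFDerivAt.const_smul s)
    unfold pd
    rw [h1.fderiv]
    simp
  have hpdz : ∀ x, ¬ DifferentiableAt ℝ u x → ∀ (s : ℝ) (k : ℕ),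
      pd k (fun y => u y + s * v y) x = 0 := by
    intro x hdx s k
    have h0 : ¬ DifferentiableAt ℝ (fun y => u y + s * v y) x := by
      intro hcon
      apply hdx
      have h2 := hcon.sub ((hvd x).const_mul s)
      have h3 : (fun y => u y + s * v y - s * v y) = u := funext fun y => by ring
      rw [← h3]; exact h2
    unfold pd
    rw [fderiv_zero_of_not_differentiableAt h0]
    simp
  have hXz : ∀ x, ¬ DifferentiableAt ℝ u x → ∀ (s : ℝ) (i : ℕ),
      XU n (fun y => u y + s * v y) i (fun y => u y + s * v y) x = 0 := by
    intro x hdx s i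
    unfold XU
    split_ifs <;> simp [hpdz x hdx s]
  -- uniform bounds
  have hpdus : ∀ x ∈ Ω, ∀ (s : ℝ), |s| ≤ 1 → ∀ k : ℕ,
      |pd k (fun y => u y + s * v y) x| ≤ K + Cv := by
    intro x hx s hs k
    by_cases hdx : DifferentiableAt ℝ u x
    · rw [hpds x hdx s k]
      have h1 := hpdu x hx k; have h2 := hpdv x k
      calc |pd k u x + s * pd k v x| ≤ |pd k u x| + |s| * |pd k v x| :=
            (abs_add_le _ _).trans (by rw [abs_mul])
        _ ≤ K + Cv := by nlinarith [abs_nonneg (pd k v x), abs_nonneg s]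
    · rw [hpdz x hdx s k]
      simpa using add_nonneg K.coe_nonneg hCv0
  set S : ℝ := 1 + R + Mu + Mv with hSdef
  have hS1 : 1 ≤ S := by rw [hSdef]; linarith
  have husx : ∀ x ∈ Ω, ∀ s : ℝ, |s| ≤ 1 → |u x + s * v x| ≤ Mu + Mv := by
    intro x hx s hs
    have h1 := hMu x hx
    have h2 := hMvx x
    calc |u x + s * v x| ≤ |u x| + |s| * |v x| := (abs_add_le _ _).trans (by rw [abs_mul])
      _ ≤ Mu + Mv := by nlinarith [abs_nonneg (v x), abs_nonneg s]
  have hXb : ∀ x ∈ Ω, ∀ s : ℝ, |s| ≤ 1 → ∀ (f : (Fin (2*n) → ℝ) → ℝ) (P : ℝ), 0 ≤ P →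
      (∀ k : ℕ, |pd k f x| ≤ P) → ∀ i : ℕ,
      |XU n (fun y => u y + s * v y) i f x| ≤ P * S := by
    intro x hx s hs f P hP hpf i
    have hco : |coordN (i - n + 1) x| ≤ R := (abs_coordN_le x).trans (hR x hx)
    have hw := husx x hx s hs
    unfold XU
    split_ifs with h1 h2
    · exact (hpf i).trans (by nlinarith)
    · calc |pd i f x - coordN (i - n + 1) x * pd (2*n-1) f x|
          ≤ |pd i f x| + |coordN (i - n + 1) x * pd (2*n-1) f x| := by
            simpa using abs_sub_le (pd i f x) 0 (coordN (i - n + 1) x * pd (2*n-1) f x)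
        _ ≤ P + R * P := by
            rw [abs_mul]
            have h3 := hpf i; have h4 := hpf (2*n-1)
            nlinarith [abs_nonneg (coordN (i - n + 1) x), abs_nonneg (pd (2*n-1) f x)]
        _ ≤ P * S := by rw [hSdef]; nlinarith
    · show |pd (2*n-2) f x + (u x + s * v x) * pd (2*n-1) f x| ≤ P * S
      calc |pd (2*n-2) f x + (u x + s * v x) * pd (2*n-1) f x|
          ≤ |pd (2*n-2) f x| + |u x + s * v x| * |pd (2*n-1) f x| :=
            (abs_add_le _ _).trans (by rw [abs_mul])
        _ ≤ P + (Mu + Mv) * P := by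
            have h3 := hpf (2*n-2); have h4 := hpf (2*n-1)
            nlinarith [abs_nonneg (u x + s * v x), abs_nonneg (pd (2*n-1) f x)]
        _ ≤ P * S := by rw [hSdef]; nlinarith
  have hKCv : (0:ℝ) ≤ (K : ℝ) + Cv := add_nonneg K.coe_nonneg hCv0
  have hXus : ∀ x ∈ Ω, ∀ s : ℝ, |s| ≤ 1 → ∀ i : ℕ,
      |XU n (fun y => u y + s * v y) i (fun y => u y + s * v y) x| ≤ ((K:ℝ) + Cv) * S :=
    fun x hx s hs => hXb x hx s hs _ ((K:ℝ) + Cv) hKCv (hpdus x hx s hs)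
  have hXvb : ∀ x ∈ Ω, ∀ s : ℝ, |s| ≤ 1 → ∀ i : ℕ,
      |XU n (fun y => u y + s * v y) i v x| ≤ Cv * S :=
    fun x hx s hs => hXb x hx s hs v Cv hCv0 (fun k => hpdv x k)
  set G : ℝ → (Fin (2*n) → ℝ) → ℝ := fun s x =>
    ((∑ i ∈ Finset.range (2*n-2),
        XU n (fun y => u y + s * v y) i (fun y => u y + s * v y) x *
          XU n (fun y => u y + s * v y) i v x)
      + XU n (fun y => u y + s * v y) (2*n-2) (fun y => u y + s * v y) x *
          (XU n (fun y => u y + s * v y) (2*n-2) v x +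
            v x * pd (2*n-1) (fun y => u y + s * v y) x))
    / Real.sqrt (1 + gradSq n (fun y => u y + s * v y) (fun y => u y + s * v y) x) with hGdef
  have hnn : ∀ (s : ℝ) x, 0 ≤ gradSq n (fun y => u y + s * v y) (fun y => u y + s * v y) x :=
    fun s x => Finset.sum_nonneg fun i _ => sq_nonneg _
  have hGzero : ∀ x, ¬ DifferentiableAt ℝ u x → ∀ s : ℝ, G s x = 0 := by
    intro x hdx s
    rw [hGdef]
    have hz1 := hXz x hdx s
    have hsum0 : (∑ i ∈ Finset.range (2*n-2),
        XU n (fun y => u y + s * v y) i (fun y => u y + s * v y) x *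
          XU n (fun y => u y + s * v y) i v x) = 0 :=
      Finset.sum_eq_zero fun i _ => by rw [hz1 i]; ring
    simp only [hsum0, hz1 (2*n-2), zero_mul, add_zero, zero_div]
  have hder : ∀ (x : Fin (2*n) → ℝ) (s₀ : ℝ),
      HasDerivAt (fun s : ℝ => Real.sqrt
        (1 + gradSq n (fun y => u y + s * v y) (fun y => u y + s * v y) x)) (G s₀ x) s₀ := by
    intro x s₀
    by_cases hdx : DifferentiableAt ℝ u x
    · have h22 : ¬ (2*n-2 < n-1) := by omega
      have h23 : ¬ (2*n-2 < 2*n-2) := lt_irrefl _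
      have hXlin : ∀ i < 2*n-2, ∀ s : ℝ,
          XU n (fun y => u y + s * v y) i (fun y => u y + s * v y) x
            = XU n u i u x + s * XU n u i v x := by
        intro i hi s; unfold XU
        by_cases h1 : i < n-1
        · simp only [if_pos h1]; rw [hpds x hdx s i]
        · simp only [if_neg h1, if_pos hi]
          rw [hpds x hdx s i, hpds x hdx s (2*n-1)]; ring
      have hXvc : ∀ i < 2*n-2, ∀ s : ℝ,
          XU n (fun y => u y + s * v y) i v x = XU n u i v x := by
        intro i hi s; unfold XU
        by_cases h1 : i < n-1
        · simp only [if_pos h1]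
        · simp only [if_neg h1, if_pos hi]
      have hXlast : ∀ s : ℝ,
          XU n (fun y => u y + s * v y) (2*n-2) (fun y => u y + s * v y) x
            = (pd (2*n-2) u x + s * pd (2*n-2) v x)
              + (u x + s * v x) * (pd (2*n-1) u x + s * pd (2*n-1) v x) := by
        intro s; unfold XU
        rw [if_neg h22, if_neg h23, hpds x hdx s (2*n-2), hpds x hdx s (2*n-1)]
      have hXlastv : ∀ s : ℝ,
          XU n (fun y => u y + s * v y) (2*n-2) v x
            = pd (2*n-2) v x + (u x + s * v x) * pd (2*n-1) v x := by
        intro s; unfold XU; rw [if_neg h22, if_neg h23]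
      have hsplit : ∀ s : ℝ,
          (1 : ℝ) + gradSq n (fun y => u y + s * v y) (fun y => u y + s * v y) x
            = 1 + ((∑ i ∈ Finset.range (2*n-2), (XU n u i u x + s * XU n u i v x) ^ 2)
              + ((pd (2*n-2) u x + s * pd (2*n-2) v x)
                  + (u x + s * v x) * (pd (2*n-1) u x + s * pd (2*n-1) v x)) ^ 2) := by
        intro s
        unfold gradSq
        rw [show Finset.range (2*n-1) = Finset.range ((2*n-2)+1) by
          rw [show 2*n-1 = (2*n-2)+1 by omega]]
        rw [Finset.sum_range_succ, hXlast s]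
        have hc : (∑ i ∈ Finset.range (2*n-2),
            (XU n (fun y => u y + s * v y) i (fun y => u y + s * v y) x) ^ 2)
            = ∑ i ∈ Finset.range (2*n-2), (XU n u i u x + s * XU n u i v x) ^ 2 :=
          Finset.sum_congr rfl fun i hi => by rw [hXlin i (Finset.mem_range.1 hi) s]
        rw [hc]
      have h1 : HasDerivAt
          (fun s : ℝ => ∑ i ∈ Finset.range (2*n-2), (XU n u i u x + s * XU n u i v x) ^ 2)
          (∑ i ∈ Finset.range (2*n-2),
            2 * (XU n u i u x + s₀ * XU n u i v x) * XU n u i v x) s₀ := by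
        apply HasDerivAt.fun_sum
        intro i _
        have h := ((hasDerivAt_mul_const (XU n u i v x)).const_add (XU n u i u x)).fun_pow 2
          (x := s₀)
        refine h.congr_deriv ?_
        norm_num
      have h2 : HasDerivAt (fun s : ℝ => ((pd (2*n-2) u x + s * pd (2*n-2) v x)
              + (u x + s * v x) * (pd (2*n-1) u x + s * pd (2*n-1) v x)) ^ 2)
          (2 * ((pd (2*n-2) u x + s₀ * pd (2*n-2) v x)
              + (u x + s₀ * v x) * (pd (2*n-1) u x + s₀ * pd (2*n-1) v x))
            * (pd (2*n-2) v x + (v x * (pd (2*n-1) u x + s₀ * pd (2*n-1) v x)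
                + (u x + s₀ * v x) * pd (2*n-1) v x))) s₀ := by
        have ha := (hasDerivAt_mul_const (pd (2*n-2) v x)).const_add (pd (2*n-2) u x) (x := s₀)
        have hb := (hasDerivAt_mul_const (v x)).const_add (u x) (x := s₀)
        have hc := (hasDerivAt_mul_const (pd (2*n-1) v x)).const_add (pd (2*n-1) u x) (x := s₀)
        have h := (ha.fun_add (hb.fun_mul hc)).fun_pow 2
        refine h.congr_deriv ?_
        norm_num
      have hQ := (h1.fun_add h2).const_add (1:ℝ)
      rw [← funext hsplit] at hQ
      have hpos : (0:ℝ) < 1 + gradSq n (fun y => u y + s₀ * v y) (fun y => u y + s₀ * v y) x := by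
        linarith [hnn s₀ x]
      have hsq := (Real.hasDerivAt_sqrt (ne_of_gt hpos)).comp s₀ hQ
      refine hsq.congr_deriv ?_
      symm
      rw [hGdef]
      have hne : Real.sqrt (1 + gradSq n (fun y => u y + s₀ * v y) (fun y => u y + s₀ * v y) x)
          ≠ 0 := ne_of_gt (Real.sqrt_pos.2 hpos)
      have hsum : (∑ i ∈ Finset.range (2*n-2),
          XU n (fun y => u y + s₀ * v y) i (fun y => u y + s₀ * v y) x *
            XU n (fun y => u y + s₀ * v y) i v x)
          = ∑ i ∈ Finset.range (2*n-2),
            (XU n u i u x + s₀ * XU n u i v x) * XU n u i v x :=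
        Finset.sum_congr rfl fun i hi => by
          rw [hXlin i (Finset.mem_range.1 hi) s₀, hXvc i (Finset.mem_range.1 hi) s₀]
      have h2sum : (∑ i ∈ Finset.range (2*n-2),
          2 * (XU n u i u x + s₀ * XU n u i v x) * XU n u i v x)
          = 2 * ∑ i ∈ Finset.range (2*n-2),
            (XU n u i u x + s₀ * XU n u i v x) * XU n u i v x := by
        rw [Finset.mul_sum]
        exact Finset.sum_congr rfl fun i _ => by ring
      simp only [hsum, hXlast s₀, hXlastv s₀, hpds x hdx s₀ (2*n-1), h2sum]
      field_simp
      ring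
    · have hgz : ∀ s : ℝ,
          gradSq n (fun y => u y + s * v y) (fun y => u y + s * v y) x = 0 := fun s =>
        Finset.sum_eq_zero fun i _ => by rw [hXz x hdx s i]; ring
      have hFc : (fun s : ℝ => Real.sqrt
          (1 + gradSq n (fun y => u y + s * v y) (fun y => u y + s * v y) x))
          = fun _ => 1 := by
        funext s; rw [hgz s]; simp
      rw [hFc, hGzero x hdx s₀]
      exact hasDerivAt_const s₀ 1
  -- measurability
  have humeas : AEMeasurable u (volume.restrict Ω) :=
    (huK.continuousOn).aemeasurable hΩo.measurableSet
  have husmeas : ∀ s : ℝ, AEMeasurable (fun x => u x + s * v x) (volume.restrict Ω) :=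
    fun s => humeas.add ((hvc.measurable.const_mul s).aemeasurable)
  have hXUmeas : ∀ (s : ℝ) (i : ℕ) (f : (Fin (2*n) → ℝ) → ℝ),
      AEMeasurable (fun x => XU n (fun y => u y + s * v y) i f x) (volume.restrict Ω) := by
    intro s i f
    unfold XU
    by_cases h1 : i < n-1
    · simp only [if_pos h1]
      exact (measurable_pd f i).aemeasurable
    by_cases h2 : i < 2*n-2
    · simp only [if_neg h1, if_pos h2]
      exact ((measurable_pd f i).aemeasurable).sub
        ((measurable_coordN.aemeasurable).mul (measurable_pd f (2*n-1)).aemeasurable)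
    · simp only [if_neg h1, if_neg h2]
      exact ((measurable_pd f (2*n-2)).aemeasurable).add
        ((husmeas s).mul (measurable_pd f (2*n-1)).aemeasurable)
  have hgradmeas : ∀ s : ℝ, AEMeasurable
      (fun x => gradSq n (fun y => u y + s * v y) (fun y => u y + s * v y) x)
      (volume.restrict Ω) := by
    intro s
    unfold gradSq
    exact Finset.aemeasurable_fun_sum _ fun i _ => (hXUmeas s i _).pow_const 2
  have hFmeas : ∀ s : ℝ, AEStronglyMeasurable
      (fun x => Real.sqrt (1 + gradSq n (fun y => u y + s * v y) (fun y => u y + s * v y) x))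
      (volume.restrict Ω) := by
    intro s
    exact (Real.continuous_sqrt.measurable.comp_aemeasurable
      ((hgradmeas s).const_add 1)).aestronglyMeasurable
  have hGmeas : ∀ s : ℝ, AEStronglyMeasurable (G s) (volume.restrict Ω) := by
    intro s
    rw [hGdef]
    apply AEMeasurable.aestronglyMeasurable
    apply AEMeasurable.div
    · exact (Finset.aemeasurable_fun_sum _ fun i _ =>
        (hXUmeas s i _).mul (hXUmeas s i v)).add
        ((hXUmeas s (2*n-2) _).mul ((hXUmeas s (2*n-2) v).add
          ((hvc.measurable.aemeasurable).mul (measurable_pd _ (2*n-1)).aemeasurable)))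
    · exact Real.continuous_sqrt.measurable.comp_aemeasurable ((hgradmeas s).const_add 1)
  -- integrability of F 0
  have hμ : volume Ω < ⊤ := hΩb.measure_lt_top
  have hgb : ∀ x ∈ Ω, ∀ s : ℝ, |s| ≤ 1 →
      gradSq n (fun y => u y + s * v y) (fun y => u y + s * v y) x
        ≤ 2*n*(((K:ℝ) + Cv) * S)^2 := by
    intro x hx s hs
    have hQ1nn : (0:ℝ) ≤ ((K:ℝ) + Cv) * S := by nlinarith
    calc gradSq n (fun y => u y + s * v y) (fun y => u y + s * v y) x
        ≤ ∑ _i ∈ Finset.range (2*n-1), (((K:ℝ) + Cv) * S)^2 := by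
          unfold gradSq
          refine Finset.sum_le_sum fun i _ => ?_
          have h := hXus x hx s hs i
          exact sq_le_sq' (by linarith [(abs_le.1 h).1]) (abs_le.1 h).2
      _ = ((2*n-1 : ℕ) : ℝ) * (((K:ℝ) + Cv) * S)^2 := by
          rw [Finset.sum_const, Finset.card_range, nsmul_eq_mul]
      _ ≤ 2*n*(((K:ℝ) + Cv) * S)^2 := by
          have hcast : ((2*n-1 : ℕ) : ℝ) ≤ 2*n := by
            have h1 : (2*n-1 : ℕ) ≤ 2*n := by omega
            calc ((2*n-1 : ℕ) : ℝ) ≤ ((2*n : ℕ) : ℝ) := Nat.cast_le.2 h1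
              _ = 2*n := by push_cast; ring
          nlinarith [sq_nonneg (((K:ℝ) + Cv) * S)]
  have hFint : Integrable
      (fun x => Real.sqrt (1 + gradSq n (fun y => u y + (0:ℝ) * v y)
        (fun y => u y + (0:ℝ) * v y) x)) (volume.restrict Ω) := by
    apply Integrable.mono' (g := fun _ => Real.sqrt (1 + 2*n*(((K:ℝ) + Cv) * S)^2))
      (integrableOn_const hμ.ne) (hFmeas 0)
    rw [ae_restrict_iff' hΩo.measurableSet]
    refine ae_of_all _ fun x hx => ?_
    rw [Real.norm_eq_abs, abs_of_nonneg (Real.sqrt_nonneg _)]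
    exact Real.sqrt_le_sqrt (by linarith [hgb x hx 0 (by norm_num)])
  -- the uniform bound on G
  set T : ℝ := ((K:ℝ) + Cv) * S * (Cv * S + Mv * ((K:ℝ) + Cv)) with hTdef
  have hS0 : (0:ℝ) ≤ S := le_trans zero_le_one hS1
  have hT0 : 0 ≤ T := by
    rw [hTdef]
    exact mul_nonneg (mul_nonneg hKCv hS0)
      (add_nonneg (mul_nonneg hCv0 hS0) (mul_nonneg hMv0 hKCv))
  have hQ1Qv : ((K:ℝ) + Cv) * S * (Cv * S) ≤ T := by
    have hsplitT : T = ((K:ℝ) + Cv) * S * (Cv * S) + ((K:ℝ) + Cv) * S * (Mv * ((K:ℝ) + Cv)) := by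
      rw [hTdef]; ring
    have h2 : 0 ≤ ((K:ℝ) + Cv) * S * (Mv * ((K:ℝ) + Cv)) :=
      mul_nonneg (mul_nonneg hKCv hS0) (mul_nonneg hMv0 hKCv)
    linarith
  have hbound : ∀ᵐ x ∂(volume.restrict Ω), ∀ s ∈ Metric.ball (0:ℝ) 1,
      ‖G s x‖ ≤ 2*n*T := by
    rw [ae_restrict_iff' hΩo.measurableSet]
    refine ae_of_all _ fun x hx s hs => ?_
    have hs1 : |s| ≤ 1 := le_of_lt (by simpa [Real.dist_eq] using Metric.mem_ball.1 hs)
    have h2nT : (0:ℝ) ≤ 2*n*T := by positivity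
    by_cases hdx : DifferentiableAt ℝ u x
    · have hsqrt1 : 1 ≤ Real.sqrt
          (1 + gradSq n (fun y => u y + s * v y) (fun y => u y + s * v y) x) := by
        nlinarith [Real.sq_sqrt (by linarith [hnn s x] :
            (0:ℝ) ≤ 1 + gradSq n (fun y => u y + s * v y) (fun y => u y + s * v y) x),
          Real.sqrt_nonneg
            (1 + gradSq n (fun y => u y + s * v y) (fun y => u y + s * v y) x),
          hnn s x]
      have hQ1nn : (0:ℝ) ≤ ((K:ℝ) + Cv) * S := by nlinarith
      have hA : |∑ i ∈ Finset.range (2*n-2),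
          XU n (fun y => u y + s * v y) i (fun y => u y + s * v y) x *
            XU n (fun y => u y + s * v y) i v x|
          ≤ ((2*n-2 : ℕ) : ℝ) * (((K:ℝ) + Cv) * S * (Cv * S)) := by
        calc _ ≤ ∑ i ∈ Finset.range (2*n-2),
            |XU n (fun y => u y + s * v y) i (fun y => u y + s * v y) x *
              XU n (fun y => u y + s * v y) i v x| := Finset.abs_sum_le_sum_abs _ _
          _ ≤ ∑ _i ∈ Finset.range (2*n-2), ((K:ℝ) + Cv) * S * (Cv * S) :=
            Finset.sum_le_sum fun i _ => by
              rw [abs_mul]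
              exact mul_le_mul (hXus x hx s hs1 i) (hXvb x hx s hs1 i) (abs_nonneg _) hQ1nn
          _ = _ := by rw [Finset.sum_const, Finset.card_range, nsmul_eq_mul]
      have hB : |XU n (fun y => u y + s * v y) (2*n-2) (fun y => u y + s * v y) x *
          (XU n (fun y => u y + s * v y) (2*n-2) v x +
            v x * pd (2*n-1) (fun y => u y + s * v y) x)| ≤ T := by
        rw [abs_mul, hTdef]
        have h1 := hXus x hx s hs1 (2*n-2)
        have h2 : |XU n (fun y => u y + s * v y) (2*n-2) v x +
            v x * pd (2*n-1) (fun y => u y + s * v y) x| ≤ Cv * S + Mv * ((K:ℝ) + Cv) := by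
          have h3 := hXvb x hx s hs1 (2*n-2)
          have h4 := hpdus x hx s hs1 (2*n-1)
          have h5 := hMvx x
          calc |XU n (fun y => u y + s * v y) (2*n-2) v x +
              v x * pd (2*n-1) (fun y => u y + s * v y) x|
              ≤ |XU n (fun y => u y + s * v y) (2*n-2) v x| +
                |v x| * |pd (2*n-1) (fun y => u y + s * v y) x| :=
                (abs_add_le _ _).trans (by rw [abs_mul])
            _ ≤ Cv * S + Mv * ((K:ℝ) + Cv) := by
                nlinarith [abs_nonneg (pd (2*n-1) (fun y => u y + s * v y) x),
                  abs_nonneg (v x)]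
        exact mul_le_mul h1 h2 (abs_nonneg _) hQ1nn
      have hcast : ((2*n-2 : ℕ) : ℝ) + 1 ≤ 2*n := by
        have h1 : (2*n-2 : ℕ) + 1 ≤ 2*n := by omega
        calc ((2*n-2 : ℕ) : ℝ) + 1 = ((2*n-2+1 : ℕ) : ℝ) := by push_cast; ring
          _ ≤ ((2*n : ℕ) : ℝ) := Nat.cast_le.2 h1
          _ = 2*n := by push_cast; ring
      have hval : G s x = ((∑ i ∈ Finset.range (2*n-2),
          XU n (fun y => u y + s * v y) i (fun y => u y + s * v y) x *
            XU n (fun y => u y + s * v y) i v x)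
          + XU n (fun y => u y + s * v y) (2*n-2) (fun y => u y + s * v y) x *
            (XU n (fun y => u y + s * v y) (2*n-2) v x +
              v x * pd (2*n-1) (fun y => u y + s * v y) x))
          / Real.sqrt (1 + gradSq n (fun y => u y + s * v y) (fun y => u y + s * v y) x) := by
        rw [hGdef]
      have habs : |(∑ i ∈ Finset.range (2*n-2),
          XU n (fun y => u y + s * v y) i (fun y => u y + s * v y) x *
            XU n (fun y => u y + s * v y) i v x)
          + XU n (fun y => u y + s * v y) (2*n-2) (fun y => u y + s * v y) x *
            (XU n (fun y => u y + s * v y) (2*n-2) v x +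
              v x * pd (2*n-1) (fun y => u y + s * v y) x)| ≤ 2*n*T := by
        calc _ ≤ _ := abs_add_le _ _
          _ ≤ ((2*n-2 : ℕ) : ℝ) * (((K:ℝ) + Cv) * S * (Cv * S)) + T := add_le_add hA hB
          _ ≤ 2*n*T := by
              nlinarith [mul_nonneg (Nat.cast_nonneg (2*n-2 : ℕ))
                  (sub_nonneg.2 hQ1Qv),
                mul_nonneg (sub_nonneg.2 hcast) hT0]
      rw [Real.norm_eq_abs, hval, abs_div, abs_of_nonneg (Real.sqrt_nonneg _)]
      exact le_trans (div_le_self (abs_nonneg _) hsqrt1) habs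
    · rw [hGzero x hdx s]
      simpa using h2nT
  have bint : Integrable (fun _ : Fin (2*n) → ℝ => 2*n*T) (volume.restrict Ω) :=
    integrableOn_const hμ.ne
  have key := (hasDerivAt_integral_of_dominated_loc_of_deriv_le (𝕜 := ℝ)
      (μ := volume.restrict Ω)
      (F := fun (s : ℝ) x => Real.sqrt
        (1 + gradSq n (fun y => u y + s * v y) (fun y => u y + s * v y) x))
      (F' := G) (x₀ := 0) (s := Metric.ball 0 1) (bound := fun _ => 2*n*T)
      (Metric.ball_mem_nhds 0 one_pos)
      (Filter.Eventually.of_forall fun s => hFmeas s)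
      hFint
      (hGmeas 0)
      hbound
      bint
      (Filter.Eventually.of_forall fun x s _ => hder x s)).2
  have hz : (fun y => u y + (0:ℝ) * v y) = u := funext fun y => by ring
  have hG0 : G 0 = fun x =>
      ((∑ i ∈ Finset.range (2*n-2), XU n u i u x * XU n u i v x)
        + XU n u (2*n-2) u x * (XU n u (2*n-2) v x + v x * pd (2*n-1) u x))
      / Real.sqrt (1 + gradSq n u u x) := by
    funext x
    rw [hGdef]
    simp only [hz]
  rw [show (∫ x in Ω,
      ((∑ i ∈ Finset.range (2*n-2), XU n u i u x * XU n u i v x)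
        + XU n u (2*n-2) u x * (XU n u (2*n-2) v x + v x * pd (2*n-1) u x))
      / Real.sqrt (1 + gradSq n u u x)) = ∫ x, G 0 x ∂(volume.restrict Ω) by rw [hG0]]
  exact key
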